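/- Let G = (V, E) be a connected simple undirected graph on N vertices, let M ∈ GL_N(ℝ) be an invertible matrix, and let K ⊂ ℝ^N be a nonempty compact set. Then there exist m ∈ ℕ, invertible G-sparse matrices W^(1), ..., W^(m), and bias vectors b^(1), ..., b^(m+1) ∈ ℝ^N such that the ReLU network defined by z^(0)(x) = x, z^(ℓ)(x) = ReLU(W^(ℓ) z^(ℓ−1)(x) + b^(ℓ)) for ℓ = 1, ..., m, and N(x) = z^(m)(x) + b^(m+1), satisfies N(x) = M x for every x ∈ K. Here ReLU acts componentwise as u ↦ max(u, 0). -/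

import Mathlib

open Matrix
open scoped MatrixGroups

/-- A matrix `W` is `G`-sparse if, for `i ≠ j`, the off-diagonal entries `W i j`
may be nonzero only when `{i, j}` is an edge of `G` (diagonal entries are free). -/
def IsGSparse {N : ℕ} (G : SimpleGraph (Fin N)) (W : Matrix (Fin N) (Fin N) ℝ) : Prop :=
  ∀ i j : Fin N, i ≠ j → ¬ G.Adj i j → W i j = 0

/-- One ReLU layer: `z ↦ ReLU (W z + b)`, with ReLU `u ↦ max u 0` applied componentwise. -/
def reluLayer {N : ℕ} (W : Matrix (Fin N) (Fin N) ℝ) (b : Fin N → ℝ)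
    (z : Fin N → ℝ) : Fin N → ℝ :=
  fun i => max ((W.mulVec z + b) i) 0

/-- Forward pass through `m` ReLU layers:
`z⁽⁰⁾(x) = x`, `z⁽ˡ⁾(x) = ReLU (W⁽ˡ⁾ z⁽ˡ⁻¹⁾(x) + b⁽ˡ⁾)`. -/
def reluForward {N : ℕ} : (m : ℕ) → (Fin m → Matrix (Fin N) (Fin N) ℝ) →
    (Fin m → (Fin N → ℝ)) → (Fin N → ℝ) → (Fin N → ℝ)
  | 0, _, _, x => x
  | m + 1, W, b, x =>
      reluLayer (W (Fin.last m)) (b (Fin.last m))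
        (reluForward m (fun ℓ => W ℓ.castSucc) (fun ℓ => b ℓ.castSucc) x)

/-!
Over a field every invertible matrix is a product of an invertible diagonal matrix and
transvections `1 + c Eᵢⱼ`. If `k` is the next vertex on a path from `i` to `j`, then `1 + c Eᵢⱼ`
is the commutator of `1 + c Eᵢₖ` and `1 + Eₖⱼ`, so induction along a path writes every
transvection, and hence every invertible matrix, as a product of invertible `G`-sparse matrices.
On a compact set, a ReLU layer with a large enough constant bias never clips and thus acts as an
affine map; stacking one layer per factor realizes `M` up to a translation, which the final bias
removes.
-/

namespace Matrix

variable {n R : Type*} [DecidableEq n] [Fintype n] [CommRing R]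

theorem transvection_commutator {i j k : n} (hij : i ≠ j) (hik : i ≠ k) (hkj : k ≠ j) (a b : R) :
    transvection i k a * transvection k j b * transvection i k (-a) * transvection k j (-b) =
      transvection i j (a * b) := by
  simp only [transvection, add_mul, mul_add, one_mul, mul_one, single_mul_single_same,
    single_mul_single_of_ne, hij.symm, hik.symm, hkj.symm, Ne, not_false_iff, add_zero]
  ext r s
  simp only [Matrix.add_apply, single_apply]
  split_ifs <;> ring

theorem isUnit_transvection {i j : n} (h : i ≠ j) (c : R) : IsUnit (transvection i j c) := by
  rw [isUnit_iff_isUnit_det, det_transvection_of_ne i j h c]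
  exact isUnit_one

end Matrix

section Sparse

variable {N : ℕ} {G : SimpleGraph (Fin N)}

def sparseUnits (G : SimpleGraph (Fin N)) : Set (Matrix (Fin N) (Fin N) ℝ) :=
  {A | IsUnit A ∧ IsGSparse G A}

theorem isGSparse_diagonal (d : Fin N → ℝ) : IsGSparse G (diagonal d) :=
  fun _ _ hij _ => diagonal_apply_ne d hij

theorem isGSparse_transvection {i j : Fin N} (h : G.Adj i j) (c : ℝ) :
    IsGSparse G (transvection i j c) := by
  intro a b hab hnadj
  have hne : ¬(i = a ∧ j = b) := by rintro ⟨rfl, rfl⟩; exact hnadj h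
  simp [transvection, one_apply_ne hab, single_apply_of_ne (h := hne)]

theorem transvection_mem_sparseUnits {i j : Fin N} (h : G.Adj i j) (c : ℝ) :
    transvection i j c ∈ sparseUnits G :=
  ⟨isUnit_transvection h.ne c, isGSparse_transvection h c⟩

theorem transvection_mem_closure_sparseUnits_of_walk {i j : Fin N} (p : G.Walk i j)
    (hij : i ≠ j) (c : ℝ) : transvection i j c ∈ Submonoid.closure (sparseUnits G) := by
  induction p generalizing c with
  | nil => exact absurd rfl hij
  | @cons i k j hik q ih =>
    by_cases hkj : k = j
    · subst hkj
      exact Submonoid.subset_closure (transvection_mem_sparseUnits hik c)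
    · have edge (d : ℝ) : transvection i k d ∈ Submonoid.closure (sparseUnits G) :=
        Submonoid.subset_closure (transvection_mem_sparseUnits hik d)
      rw [← mul_one c, ← transvection_commutator hij hik.ne hkj]
      exact mul_mem (mul_mem (mul_mem (edge c) (ih hkj 1)) (edge (-c))) (ih hkj (-1))

theorem mem_closure_sparseUnits_of_isUnit (hG : G.Connected) {M : Matrix (Fin N) (Fin N) ℝ}
    (hM : IsUnit M) : M ∈ Submonoid.closure (sparseUnits G) := by
  refine diagonal_transvection_induction_of_det_ne_zero _ M
    ((isUnit_iff_isUnit_det M).1 hM).ne_zero (fun D hD => ?_) (fun t => ?_)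
    (fun _ _ _ _ => mul_mem)
  · exact Submonoid.subset_closure
      ⟨(isUnit_iff_isUnit_det _).2 hD.isUnit, isGSparse_diagonal D⟩
  · obtain ⟨p⟩ := hG.preconnected t.i t.j
    exact transvection_mem_closure_sparseUnits_of_walk p t.hij t.c

end Sparse

section Network

variable {N : ℕ}

theorem exists_bias_reluLayer_eq_on (A : Matrix (Fin N) (Fin N) ℝ) {S : Set (Fin N → ℝ)}
    (hS : IsCompact S) : ∃ β : Fin N → ℝ, ∀ z ∈ S, reluLayer A β z = A *ᵥ z + β := by
  obtain ⟨C, hC⟩ := hS.exists_bound_of_continuousOn (f := (A *ᵥ ·))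
    (Continuous.matrix_mulVec continuous_const continuous_id).continuousOn
  refine ⟨fun _ => C, fun z hz => funext fun i => max_eq_left ?_⟩
  have : |(A *ᵥ z) i| ≤ C := (norm_le_pi_norm (A *ᵥ z) i).trans (hC z hz)
  simp only [Pi.add_apply]
  linarith [neg_abs_le ((A *ᵥ z) i)]

theorem reluForward_snoc (m : ℕ) (W : Fin m → Matrix (Fin N) (Fin N) ℝ)
    (b : Fin m → (Fin N → ℝ)) (A : Matrix (Fin N) (Fin N) ℝ) (β : Fin N → ℝ)
    (x : Fin N → ℝ) :
    reluForward (m + 1) (Fin.snoc W A) (Fin.snoc b β) x = reluLayer A β (reluForward m W b x) := by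
  simp only [reluForward, Fin.snoc_last, Fin.snoc_castSucc]

theorem exists_reluForward_eq_affine_on {G : SimpleGraph (Fin N)} {K : Set (Fin N → ℝ)}
    (hK : IsCompact K) {M : Matrix (Fin N) (Fin N) ℝ}
    (hM : M ∈ Submonoid.closure (sparseUnits G)) :
    ∃ (m : ℕ) (W : Fin m → Matrix (Fin N) (Fin N) ℝ) (b : Fin m → (Fin N → ℝ))
      (c : Fin N → ℝ), (∀ ℓ, W ℓ ∈ sparseUnits G) ∧
      ∀ x ∈ K, reluForward m W b x = M *ᵥ x + c := by
  induction hM using Submonoid.closure_induction_left with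
  | one => exact ⟨0, Fin.elim0, Fin.elim0, 0, fun ℓ => ℓ.elim0, fun x _ => by simp [reluForward]⟩
  | mul_left A hA B _ ih =>
    obtain ⟨m, W, b, c, hW, hnet⟩ := ih
    let f : (Fin N → ℝ) → (Fin N → ℝ) := fun x => B *ᵥ x + c
    have hf : Continuous f := (Continuous.matrix_mulVec continuous_const continuous_id).add
      continuous_const
    obtain ⟨β, hβ⟩ := exists_bias_reluLayer_eq_on A (hK.image hf)
    refine ⟨m + 1, Fin.snoc W A, Fin.snoc b β, A *ᵥ c + β,
      Fin.lastCases (by simpa using hA) (by simpa using hW), fun x hx => ?_⟩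
    rw [reluForward_snoc, hnet x hx, hβ _ ⟨x, hx, rfl⟩, mulVec_add, mulVec_mulVec, add_assoc]

end Network

theorem relu_sparse_network_realizes_invertible_linear_map_general {N : ℕ}
    (G : SimpleGraph (Fin N)) (hG : G.Connected)
    (M : Matrix (Fin N) (Fin N) ℝ) (hM : IsUnit M)
    (K : Set (Fin N → ℝ)) (hK : IsCompact K) :
    ∃ (m : ℕ) (W : Fin m → Matrix (Fin N) (Fin N) ℝ)
      (b : Fin m → (Fin N → ℝ)) (bfin : Fin N → ℝ),
      (∀ ℓ, IsUnit (W ℓ) ∧ IsGSparse G (W ℓ)) ∧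
      ∀ x ∈ K, reluForward m W b x + bfin = M.mulVec x := by
  obtain ⟨m, W, b, c, hW, hnet⟩ :=
    exists_reluForward_eq_affine_on hK (mem_closure_sparseUnits_of_isUnit hG hM)
  exact ⟨m, W, b, -c, hW, fun x hx => by rw [hnet x hx, add_neg_cancel_right]⟩

/-- Exact representation of an invertible linear map on a compact set by a ReLU network
all of whose weight matrices are invertible and `G`-sparse, for a connected graph `G`:
there are layers `W⁽¹⁾, …, W⁽ᵐ⁾`, biases `b⁽¹⁾, …, b⁽ᵐ⁺¹⁾` such that the network
`x ↦ z⁽ᵐ⁾(x) + b⁽ᵐ⁺¹⁾` equals `x ↦ M x` on `K`. -/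
theorem relu_sparse_network_realizes_invertible_linear_map {N : ℕ}
    (G : SimpleGraph (Fin N)) (hG : G.Connected)
    (M : Matrix (Fin N) (Fin N) ℝ) (hM : IsUnit M)
    (K : Set (Fin N → ℝ)) (hK : IsCompact K) (hKne : K.Nonempty) :
    ∃ (m : ℕ) (W : Fin m → Matrix (Fin N) (Fin N) ℝ)
      (b : Fin m → (Fin N → ℝ)) (bfin : Fin N → ℝ),
      (∀ ℓ, IsUnit (W ℓ) ∧ IsGSparse G (W ℓ)) ∧
      ∀ x ∈ K, reluForward m W b x + bfin = M.mulVec x :=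
  relu_sparse_network_realizes_invertible_linear_map_general G hG M hM K hK
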